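/- Let X be a Hausdorff space, W a finite family of continuous self-maps of X, and φ : X → X an attracting map (for every x, lim_n φ^n(x) exists and lies in Fix(φ)). Suppose Fix(φ) is a pointwise attractor of (X, W) and W(X) ⊆ Fix(φ). Then Fix(φ) is a pointwise attractor of the IFS (X, W ∪ {φ}), with pointwise basin containing B_p(Fix(φ), W). -/

import Mathlib

open Filter Topology Set

/-- Convergence of a sequence of sets in the Vietoris topology: the sequence is
eventually in every subbasic Vietoris-open set containing the limit. -/
def VConv {X : Type*} [TopologicalSpace X] (A : ℕ → Set X) (L : Set X) : Prop :=
  (∀ U : Set X, IsOpen U → L ⊆ U → ∀ᶠ n in atTop, A n ⊆ U) ∧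
  (∀ U : Set X, IsOpen U → (L ∩ U).Nonempty → ∀ᶠ n in atTop, (A n ∩ U).Nonempty)

/-- Hutchinson (Barnsley–Hutchinson) operator of a family of maps. -/
def hutch {X : Type*} (F : Set (X → X)) (S : Set X) : Set X := ⋃ f ∈ F, f '' S

/-- Strict attractor of the IFS given by the family `F`. -/
def StrictAttractor {X : Type*} [TopologicalSpace X] (F : Set (X → X)) (A : Set X) : Prop :=
  A.Nonempty ∧ IsCompact A ∧ ∃ U : Set X, IsOpen U ∧ A ⊆ U ∧
    ∀ S : Set X, S.Nonempty → IsCompact S → S ⊆ U →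
      VConv (fun n => (hutch F)^[n] S) A

/-- Pointwise basin of a set for the IFS given by `F`. -/
def pBasin {X : Type*} [TopologicalSpace X] (F : Set (X → X)) (A : Set X) : Set X :=
  {x | VConv (fun n => (hutch F)^[n] {x}) A}

/-- Pointwise attractor of the IFS given by the family `F`. -/
def PtAttractor {X : Type*} [TopologicalSpace X] (F : Set (X → X)) (A : Set X) : Prop :=
  A.Nonempty ∧ IsCompact A ∧ A ⊆ interior (pBasin F A)

/-- Kuratowski lower limit. -/
def KLi {X : Type*} [TopologicalSpace X] (A : ℕ → Set X) : Set X :=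
  {x | ∀ U : Set X, IsOpen U → x ∈ U → ∀ᶠ n in atTop, (A n ∩ U).Nonempty}

/-- Kuratowski upper limit. -/
def KLs {X : Type*} [TopologicalSpace X] (A : ℕ → Set X) : Set X :=
  {x | ∀ U : Set X, IsOpen U → x ∈ U → ∃ᶠ n in atTop, (A n ∩ U).Nonempty}

/-! Every map of `W` lands in `Fix φ`, so along any orbit of the enlarged system only the
`φ`-branch can leave `Fix φ`: after `n` steps the Hutchinson iterate of `{x}` lies in
`Fix φ ∪ {φⁿ x}`. Since `φⁿ x` converges to a point of `Fix φ`, this gives the upper half of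
Vietoris convergence, while the lower half is inherited from the smaller iterates of `W` alone. -/

section Hutchinson

variable {X : Type*}

theorem hutch_union (F G : Set (X → X)) (S : Set X) :
    hutch (F ∪ G) S = hutch F S ∪ hutch G S := by
  simp only [hutch, biUnion_union]

theorem hutch_singleton (f : X → X) (S : Set X) : hutch {f} S = f '' S := by
  simp only [hutch, mem_singleton_iff, iUnion_iUnion_eq_left]

theorem hutch_mono (F : Set (X → X)) : Monotone (hutch F) :=
  fun _ _ hST => iUnion₂_mono fun _ _ => image_mono hST

theorem hutch_subset_hutch {F G : Set (X → X)} (hFG : F ⊆ G) (S : Set X) :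
    hutch F S ⊆ hutch G S :=
  biUnion_subset_biUnion_left hFG

theorem iterate_hutch_subset_iterate_hutch {F G : Set (X → X)} (hFG : F ⊆ G) (S : Set X)
    (n : ℕ) : (hutch F)^[n] S ⊆ (hutch G)^[n] S := by
  induction n with
  | zero => exact subset_rfl
  | succ n ih =>
    rw [Function.iterate_succ_apply', Function.iterate_succ_apply']
    exact (hutch_mono F ih).trans (hutch_subset_hutch hFG _)

theorem hutch_subset_of_forall_mem {F : Set (X → X)} {A : Set X}
    (hF : ∀ f ∈ F, ∀ x, f x ∈ A) (S : Set X) : hutch F S ⊆ A :=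
  iUnion₂_subset fun f hf => image_subset_iff.mpr fun x _ => hF f hf x

theorem iterate_hutch_union_singleton_subset {W : Set (X → X)} {φ : X → X}
    (hWX : ∀ w ∈ W, ∀ x, φ (w x) = w x) (S : Set X) (n : ℕ) :
    (hutch (W ∪ {φ}))^[n] S ⊆ φ^[n] '' S ∪ {x | φ x = x} := by
  induction n with
  | zero => simp only [Function.iterate_zero, id_eq, image_id, subset_union_left]
  | succ n ih =>
    have hfix : φ '' {x | φ x = x} ⊆ {x | φ x = x} := by
      rintro _ ⟨x, hx, rfl⟩
      exact congrArg φ hx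
    rw [Function.iterate_succ_apply', hutch_union, hutch_singleton, Function.iterate_succ',
      image_comp]
    refine union_subset (hutch_subset_of_forall_mem hWX _ |>.trans subset_union_right) ?_
    refine (image_mono ih).trans ?_
    rw [image_union]
    exact union_subset_union_right _ hfix

end Hutchinson

section Vietoris

variable {X : Type*} [TopologicalSpace X]

theorem VConv.of_subset_of_subset_insert {A B : ℕ → Set X} {L : Set X} {u : ℕ → X} {y : X}
    (hA : VConv A L) (hAB : ∀ n, A n ⊆ B n) (hBL : ∀ n, B n ⊆ insert (u n) L)
    (hu : Tendsto u atTop (𝓝 y)) (hy : y ∈ L) : VConv B L := by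
  refine ⟨fun U hU hLU => ?_, fun U hU hLU => ?_⟩
  · filter_upwards [hu.eventually (hU.mem_nhds (hLU hy))] with n hn
    exact (hBL n).trans (insert_subset hn hLU)
  · filter_upwards [hA.2 U hU hLU] with n hn
    exact hn.mono (inter_subset_inter_left U (hAB n))

theorem PtAttractor.of_pBasin_subset {F G : Set (X → X)} {A : Set X} (hF : PtAttractor F A)
    (hFG : pBasin F A ⊆ pBasin G A) : PtAttractor G A :=
  ⟨hF.1, hF.2.1, hF.2.2.trans (interior_mono hFG)⟩

theorem pBasin_subset_pBasin_union_singleton {W : Set (X → X)} {φ : X → X}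
    (hattr : ∀ x : X, ∃ y : X, φ y = y ∧ Tendsto (fun n => φ^[n] x) atTop (𝓝 y))
    (hWX : ∀ w ∈ W, ∀ x, φ (w x) = w x) :
    pBasin W {x | φ x = x} ⊆ pBasin (W ∪ {φ}) {x | φ x = x} := by
  intro x hx
  obtain ⟨y, hy, hxy⟩ := hattr x
  refine hx.of_subset_of_subset_insert
    (fun n => iterate_hutch_subset_iterate_hutch subset_union_left {x} n) (fun n => ?_) hxy hy
  simpa only [image_singleton, singleton_union] using
    iterate_hutch_union_singleton_subset hWX {x} n

end Vietoris

theorem pointwise_attractor_add_attracting_map_general {X : Type*} [TopologicalSpace X]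
    (W : Set (X → X))
    (φ : X → X)
    (hattr : ∀ x : X, ∃ y : X, φ y = y ∧ Tendsto (fun n => φ^[n] x) atTop (𝓝 y))
    (hpt : PtAttractor W {x : X | φ x = x})
    (hWX : ∀ w ∈ W, ∀ x : X, φ (w x) = w x) :
    PtAttractor (W ∪ {φ}) {x : X | φ x = x} ∧
    pBasin W {x : X | φ x = x} ⊆ pBasin (W ∪ {φ}) {x : X | φ x = x} := by
  have hbasin := pBasin_subset_pBasin_union_singleton hattr hWX
  exact ⟨hpt.of_pBasin_subset hbasin, hbasin⟩

theorem pointwise_attractor_add_attracting_map {X : Type*} [TopologicalSpace X] [T2Space X]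
    (W : Set (X → X)) (hW : W.Finite) (hWcont : ∀ w ∈ W, Continuous w)
    (φ : X → X) (hφ : Continuous φ)
    (hattr : ∀ x : X, ∃ y : X, φ y = y ∧ Tendsto (fun n => φ^[n] x) atTop (𝓝 y))
    (hpt : PtAttractor W {x : X | φ x = x})
    (hWX : ∀ w ∈ W, ∀ x : X, φ (w x) = w x) :
    PtAttractor (W ∪ {φ}) {x : X | φ x = x} ∧
    pBasin W {x : X | φ x = x} ⊆ pBasin (W ∪ {φ}) {x : X | φ x = x} :=
  pointwise_attractor_add_attracting_map_general W φ hattr hpt hWX
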